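/- Hadamard-type bound for capacity: if K and W are N×N positive semidefinite Hermitian matrices with eigenvalue decompositions K = P Λ_K P† and W = V Λ_W V† (P, V unitary), then det(I + σ^{-2} K W) ≤ det(I + σ^{-2} Λ_K Λ_W) when the eigenvalues in Λ_K and Λ_W are sorted appropriately, with equality when P = V. -/

import Mathlib

open Matrix ComplexOrder
open Finset

/-!
Put `S = V Λ_W^{1/2}`, so that `W = S Sᴴ` and `Sᴴ S = Λ_W`. By Sylvester's identity
`det (I + σ⁻² K W) = det (I + σ⁻² Sᴴ K S) = ∏ (1 + σ⁻² μ_i)`, where `μ_1 ≥ ⋯ ≥ μ_N ≥ 0` are the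
eigenvalues of `Sᴴ K S`. If `Q` collects the top `k` eigenvectors, then
`μ_1 ⋯ μ_k = det (Qᴴ Sᴴ K S Q)`, and the Cauchy–Binet bound
`det (Rᴴ diag(a) R) ≤ a_1 ⋯ a_k · det (Rᴴ R)` for decreasing `a ≥ 0`, applied with `R = Pᴴ S Q`
and then with `R = Q`, gives Horn's inequalities `μ_1 ⋯ μ_k ≤ α_1 λ_1 ⋯ α_k λ_k`.
For a decreasing sequence `x`, such a weak log-majorization implies `∏ (1 + x_i) ≤ ∏ (1 + y_i)`,
by the convexity of `t ↦ log (1 + eᵗ)` and Abel summation.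
When `P = V`, `K W = P Λ_K Λ_W Pᴴ` and the bound is attained.
-/

/-- The tangent line at `log u` of the convex function `t ↦ log (1 + eᵗ)` lies below it. -/
theorem Real.log_one_add_sub_log_one_add_le {u v : ℝ} (hu : 0 < u) (hv : 0 < v) :
    Real.log (1 + u) - Real.log (1 + v) ≤ u / (1 + u) * (Real.log u - Real.log v) := by
  have hconc := strictConcaveOn_log_Ioi.concaveOn.2 (Set.mem_Ioi.2 one_pos)
    (Set.mem_Ioi.2 (div_pos hv hu)) (by positivity : (0 : ℝ) ≤ 1 / (1 + u))
    (by positivity : (0 : ℝ) ≤ u / (1 + u)) (by field_simp)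
  have hmix : 1 / (1 + u) * 1 + u / (1 + u) * (v / u) = (1 + v) / (1 + u) := by
    field_simp
  simp only [smul_eq_mul, Real.log_one, mul_zero, zero_add, hmix] at hconc
  rw [Real.log_div hv.ne' hu.ne', Real.log_div (by positivity) (by positivity)] at hconc
  linarith

theorem Finset.sum_range_mul_nonpos_of_antitoneOn {n : ℕ} {t d : ℕ → ℝ}
    (ht0 : ∀ i < n, 0 ≤ t i) (ht : AntitoneOn t (Set.Iio n))
    (hd : ∀ k ≤ n, ∑ i ∈ range k, d i ≤ 0) :
    ∑ i ∈ range n, t i * d i ≤ 0 := by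
  rcases Nat.eq_zero_or_pos n with rfl | hn
  · simp
  have hlast : t (n - 1) * ∑ i ∈ range n, d i ≤ 0 :=
    mul_nonpos_of_nonneg_of_nonpos (ht0 _ (by omega)) (hd n le_rfl)
  have hsteps : 0 ≤ ∑ i ∈ range (n - 1), (t (i + 1) - t i) * ∑ j ∈ range (i + 1), d j :=
    sum_nonneg fun i hi => by
      have hi := mem_range.1 hi
      exact mul_nonneg_of_nonpos_of_nonpos
        (sub_nonpos.2 (ht (by simp; omega) (by simp; omega) (by omega))) (hd _ (by omega))
  have := sum_range_by_parts t d n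
  simp only [smul_eq_mul] at this
  linarith

theorem prod_range_one_add_le_of_forall_prod_range_le_of_pos {n : ℕ} {x y : ℕ → ℝ}
    (hx : ∀ i < n, 0 < x i) (hy : ∀ i < n, 0 < y i) (hxa : AntitoneOn x (Set.Iio n))
    (h : ∀ k ≤ n, ∏ i ∈ range k, x i ≤ ∏ i ∈ range k, y i) :
    ∏ i ∈ range n, (1 + x i) ≤ ∏ i ∈ range n, (1 + y i) := by
  have hx1 : ∀ i ∈ range n, 0 < 1 + x i := fun i hi => by linarith [hx i (mem_range.1 hi)]
  have hy1 : ∀ i ∈ range n, 0 < 1 + y i := fun i hi => by linarith [hy i (mem_range.1 hi)]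
  rw [← Real.log_le_log_iff (prod_pos hx1) (prod_pos hy1), ← sub_nonpos,
    Real.log_prod fun i hi => (hx1 i hi).ne', Real.log_prod fun i hi => (hy1 i hi).ne',
    ← sum_sub_distrib]
  calc ∑ i ∈ range n, (Real.log (1 + x i) - Real.log (1 + y i))
      ≤ ∑ i ∈ range n, x i / (1 + x i) * (Real.log (x i) - Real.log (y i)) :=
        sum_le_sum fun i hi => Real.log_one_add_sub_log_one_add_le (hx i (mem_range.1 hi))
          (hy i (mem_range.1 hi))
    _ ≤ 0 := by
        refine sum_range_mul_nonpos_of_antitoneOn (fun i hi => by have := hx i hi; positivity)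
          (fun i hi j hj hij => ?_) fun k hk => ?_
        · have hxi := hx i hi
          have hxj := hx j hj
          rw [div_le_div_iff₀ (by linarith) (by linarith)]
          nlinarith [hxa hi hj hij]
        · have hxk : ∀ i ∈ range k, 0 < x i := fun i hi => hx i (by simp at hi; omega)
          have hyk : ∀ i ∈ range k, 0 < y i := fun i hi => hy i (by simp at hi; omega)
          rw [sum_sub_distrib, ← Real.log_prod fun i hi => (hxk i hi).ne',
            ← Real.log_prod fun i hi => (hyk i hi).ne', sub_nonpos]
          exact Real.log_le_log (prod_pos hxk) (h k hk)

theorem prod_range_one_add_le_of_forall_prod_range_le {n : ℕ} {x y : ℕ → ℝ}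
    (hx : ∀ i < n, 0 ≤ x i) (hy : ∀ i < n, 0 ≤ y i) (hxa : AntitoneOn x (Set.Iio n))
    (h : ∀ k ≤ n, ∏ i ∈ range k, x i ≤ ∏ i ∈ range k, y i) :
    ∏ i ∈ range n, (1 + x i) ≤ ∏ i ∈ range n, (1 + y i) := by
  induction n with
  | zero => simp
  | succ n ih =>
    rcases (hx n n.lt_succ_self).eq_or_lt with hzero | hpos
    · have hxy := ih (fun i hi => hx i (by omega)) (fun i hi => hy i (by omega))
        (hxa.mono (Set.Iio_subset_Iio n.le_succ)) fun k hk => h k (by omega)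
      rw [prod_range_succ, prod_range_succ, ← hzero, add_zero, mul_one]
      exact hxy.trans (le_mul_of_one_le_right
        (prod_nonneg fun i hi => by linarith [hy i (by simp at hi; omega)])
        (by linarith [hy n n.lt_succ_self]))
    · have hxpos : ∀ i < n + 1, 0 < x i := fun i hi =>
        hpos.trans_le (hxa (by simpa using hi) (by simp) (by omega))
      have hypos : ∀ i < n + 1, 0 < y i := by
        intro i hi
        refine (hy i hi).lt_of_ne' fun hyi => ?_
        have hprod := h (n + 1) le_rfl
        rw [prod_eq_zero (mem_range.2 hi) hyi] at hprod
        exact (prod_pos fun j hj => hxpos j (mem_range.1 hj)).not_ge hprod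
      exact prod_range_one_add_le_of_forall_prod_range_le_of_pos hxpos hypos hxa h

theorem Fin.prod_one_add_mul_le_of_forall_prod_castLE_le {n : ℕ} {x y : Fin n → ℝ}
    (hx : ∀ i, 0 ≤ x i) (hy : ∀ i, 0 ≤ y i) (hxa : Antitone x)
    (h : ∀ k (hk : k ≤ n), ∏ j : Fin k, x (Fin.castLE hk j) ≤ ∏ j : Fin k, y (Fin.castLE hk j))
    {c : ℝ} (hc : 0 ≤ c) :
    ∏ i, (1 + c * x i) ≤ ∏ i, (1 + c * y i) := by
  let toSeq (f : Fin n → ℝ) (i : ℕ) : ℝ := if hi : i < n then c * f ⟨i, hi⟩ else 0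
  have hprod (f : Fin n → ℝ) (k : ℕ) (hk : k ≤ n) :
      ∏ i ∈ range k, toSeq f i = c ^ k * ∏ j : Fin k, f (Fin.castLE hk j) := by
    have hext (j : Fin k) : toSeq f j = c * f (Fin.castLE hk j) := dif_pos (j.2.trans_le hk)
    rw [← Fin.prod_univ_eq_prod_range]
    simp only [hext, prod_mul_distrib, Fin.prod_const]
  have hseq := prod_range_one_add_le_of_forall_prod_range_le (n := n)
    (x := toSeq x) (y := toSeq y)
    (fun i hi => by simp only [toSeq, dif_pos hi]; exact mul_nonneg hc (hx _))
    (fun i hi => by simp only [toSeq, dif_pos hi]; exact mul_nonneg hc (hy _))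
    (fun i hi j hj hij => by
      simp only [toSeq, dif_pos (show i < n from hi), dif_pos (show j < n from hj)]
      exact mul_le_mul_of_nonneg_left (hxa (Fin.mk_le_mk.2 hij)) hc)
    fun k hk => by
      rw [hprod x k hk, hprod y k hk]
      exact mul_le_mul_of_nonneg_left (h k hk) (pow_nonneg hc k)
  simpa only [← Fin.prod_univ_eq_prod_range, toSeq, Fin.is_lt, dif_pos, Fin.eta] using hseq

theorem Antitone.prod_comp_le_prod_castLE {N k : ℕ} {a : Fin N → ℝ} (ha : Antitone a)
    (ha0 : ∀ i, 0 ≤ a i) {g : Fin k → Fin N} (hg : Function.Injective g) (hk : k ≤ N) :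
    ∏ j, a (g j) ≤ ∏ j, a (Fin.castLE hk j) := by
  set s := univ.image g
  have hcard : s.card = k := by simp [s, card_image_of_injective _ hg]
  set o := s.orderEmbOfFin hcard
  have hle (j : Fin k) : Fin.castLE hk j ≤ o j := by
    have h := card_le_card_of_injOn o (s := Iio j) (t := Iio (o j))
      (fun x hx => by simpa using o.strictMono (by simpa using hx)) o.injective.injOn
    simpa [Fin.le_def, Fin.card_Iio] using h
  calc ∏ j, a (g j) = ∏ i ∈ s, a i := (prod_image fun x _ y _ h => hg h).symm
    _ = ∏ j, a (o j) := by
        conv_lhs => rw [← image_orderEmbOfFin_univ s hcard]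
        exact prod_image fun x _ y _ h => o.injective h
    _ ≤ ∏ j, a (Fin.castLE hk j) := prod_le_prod (fun j _ => ha0 _) fun j _ => ha (hle j)

namespace Matrix

section CauchyBinet

variable {R : Type*} [CommRing R] {m n : Type*} [Fintype m] [DecidableEq m] [Fintype n]

theorem det_mul_eq_sum_prod_mul_det_submatrix (X : Matrix m n R) (Y : Matrix n m R) :
    (X * Y).det = ∑ f : m → n, (∏ j, Y (f j) j) * (X.submatrix id f).det := by
  simp only [det_apply', mul_apply, prod_univ_sum, mul_sum, Fintype.piFinset_univ,
    submatrix_apply, id_eq, prod_mul_distrib]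
  rw [sum_comm]
  exact sum_congr rfl fun f _ => sum_congr rfl fun σ _ => by ring

theorem factorial_card_mul_det_mul (X : Matrix m n R) (Y : Matrix n m R) :
    ((Fintype.card m).factorial : R) * (X * Y).det =
      ∑ f : m → n, (X.submatrix id f).det * (Y.submatrix f id).det := by
  -- Reindexing by `f ↦ f ∘ τ` multiplies each minor of `X` by `sign τ`; summing over `τ` then
  -- assembles the weights `∏ j, Y (f (τ j)) j` into the minor of `Y`.
  have hperm (τ : Equiv.Perm m) : (X * Y).det = ∑ f : m → n,
      (Equiv.Perm.sign τ : R) * (∏ j, Y (f (τ j)) j) * (X.submatrix id f).det := by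
    rw [det_mul_eq_sum_prod_mul_det_submatrix,
      ← Equiv.sum_comp (Equiv.arrowCongr τ.symm (Equiv.refl n))]
    refine sum_congr rfl fun f _ => ?_
    have hsub : X.submatrix id (τ.symm.arrowCongr (Equiv.refl n) f) =
        (X.submatrix id f).submatrix id τ := by
      ext; simp
    rw [hsub, det_permute']
    simp only [Equiv.arrowCongr_apply, Equiv.symm_symm, Equiv.coe_refl, Function.comp_apply,
      id_eq]
    ring
  calc ((Fintype.card m).factorial : R) * (X * Y).det = ∑ _τ : Equiv.Perm m, (X * Y).det := by
        simp [Fintype.card_perm]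
    _ = ∑ τ : Equiv.Perm m, ∑ f : m → n,
          (Equiv.Perm.sign τ : R) * (∏ j, Y (f (τ j)) j) * (X.submatrix id f).det :=
        sum_congr rfl fun τ _ => hperm τ
    _ = _ := by
        rw [sum_comm]
        refine sum_congr rfl fun f _ => ?_
        rw [det_apply' (Y.submatrix f id), mul_sum]
        refine sum_congr rfl fun τ _ => ?_
        simp only [submatrix_apply, id_eq]
        ring

end CauchyBinet

variable {m n : Type*} [Fintype n]

theorem conjTranspose_submatrix_mul_mul_submatrix {α : Type*} [NonUnitalNonAssocSemiring α]
    [Star α] (U X : Matrix n n α) (g : m → n) :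
    (U.submatrix id g)ᴴ * X * U.submatrix id g = (Uᴴ * X * U).submatrix g g := by
  rw [conjTranspose_submatrix, ← submatrix_id_id X,
    ← submatrix_mul _ _ _ _ _ Function.bijective_id,
    ← submatrix_mul _ _ _ _ _ Function.bijective_id, submatrix_id_id]

section Unitary

variable {α : Type*} [CommRing α] [StarRing α] [DecidableEq n] {U : Matrix n n α}

theorem conjTranspose_submatrix_mul_submatrix_of_mem_unitaryGroup [DecidableEq m]
    (hU : U ∈ unitaryGroup n α) {g : m → n} (hg : Function.Injective g) :
    (U.submatrix id g)ᴴ * U.submatrix id g = 1 := by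
  have hUU : Uᴴ * U = 1 := mem_unitaryGroup_iff'.1 hU
  have h := conjTranspose_submatrix_mul_mul_submatrix U 1 g
  rwa [Matrix.mul_one, Matrix.mul_one, hUU, submatrix_one _ hg] at h

theorem conjTranspose_submatrix_mul_unitary_conj_mul_submatrix [DecidableEq m]
    (hU : U ∈ unitaryGroup n α) (d : n → α) {g : m → n} (hg : Function.Injective g) :
    (U.submatrix id g)ᴴ * (U * diagonal d * Uᴴ) * U.submatrix id g = diagonal (d ∘ g) := by
  have hUU : Uᴴ * U = 1 := mem_unitaryGroup_iff'.1 hU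
  rw [conjTranspose_submatrix_mul_mul_submatrix, ← Matrix.mul_assoc, ← Matrix.mul_assoc, hUU,
    Matrix.one_mul, Matrix.mul_assoc, hUU, Matrix.mul_one, submatrix_diagonal _ _ hg]

theorem det_one_add_smul_unitary_conj_diagonal (hU : U ∈ unitaryGroup n α) (c : α)
    (d : n → α) :
    (1 + c • (U * diagonal d * Uᴴ)).det = ∏ i, (1 + c * d i) := by
  have hUU : Uᴴ * U = 1 := mem_unitaryGroup_iff'.1 hU
  rw [← smul_mul, det_one_add_mul_comm, Matrix.mul_smul, ← Matrix.mul_assoc, hUU,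
    Matrix.one_mul, ← diagonal_smul, ← diagonal_one, diagonal_add, det_diagonal]
  simp

end Unitary

section Complex

variable [Fintype m] [DecidableEq m] [DecidableEq n]

theorem factorial_card_mul_det_conjTranspose_mul_diagonal_mul (R : Matrix n m ℂ) (a : n → ℝ) :
    ((Fintype.card m).factorial : ℂ) * (Rᴴ * diagonal (fun i => (a i : ℂ)) * R).det =
      ∑ f : m → n, (((∏ j, a (f j)) * Complex.normSq (R.submatrix f id).det : ℝ) : ℂ) := by
  rw [factorial_card_mul_det_mul]
  refine sum_congr rfl fun f _ => ?_
  have hsub : (Rᴴ * diagonal (fun i => (a i : ℂ))).submatrix id f =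
      (R.submatrix f id)ᴴ * diagonal (fun j => (a (f j) : ℂ)) := by
    ext; simp [mul_diagonal]
  rw [hsub, det_mul, det_conjTranspose, det_diagonal, mul_right_comm, Complex.star_def,
    Complex.conj_mul', Complex.normSq_eq_norm_sq]
  push_cast
  ring

theorem re_det_conjTranspose_mul_diagonal_mul_le (R : Matrix n m ℂ) (a : n → ℝ) {B : ℝ}
    (hB : ∀ f : m → n, Function.Injective f → ∏ j, a (f j) ≤ B) :
    (Rᴴ * diagonal (fun i => (a i : ℂ)) * R).det.re ≤ B * (Rᴴ * R).det.re := by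
  have hsum (b : n → ℝ) : ((Fintype.card m).factorial : ℝ) *
      (Rᴴ * diagonal (fun i => (b i : ℂ)) * R).det.re =
        ∑ f : m → n, (∏ j, b (f j)) * Complex.normSq (R.submatrix f id).det := by
    simpa [-Complex.ofReal_mul, -Complex.ofReal_prod] using
      congrArg Complex.re (factorial_card_mul_det_conjTranspose_mul_diagonal_mul R b)
  have hgram := hsum 1
  simp only [Pi.one_apply, Complex.ofReal_one, diagonal_one, Matrix.mul_one, prod_const_one,
    one_mul] at hgram
  rw [← mul_le_mul_iff_right₀ (by positivity : (0 : ℝ) < (Fintype.card m).factorial), hsum a,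
    mul_left_comm, hgram, mul_sum]
  refine sum_le_sum fun f _ => ?_
  by_cases hf : Function.Injective f
  · exact mul_le_mul_of_nonneg_right (hB f hf) (Complex.normSq_nonneg _)
  · obtain ⟨i, j, hij, hne⟩ := Function.not_injective_iff.1 hf
    rw [det_zero_of_row_eq hne (by ext; simp [hij])]
    simp

theorem re_det_conjTranspose_mul_unitary_conj_mul_le {P : Matrix n n ℂ}
    (hP : P ∈ unitaryGroup n ℂ) (R : Matrix n m ℂ) (a : n → ℝ) {B : ℝ}
    (hB : ∀ f : m → n, Function.Injective f → ∏ j, a (f j) ≤ B) :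
    (Rᴴ * (P * diagonal (fun i => (a i : ℂ)) * Pᴴ) * R).det.re ≤ B * (Rᴴ * R).det.re := by
  have hPP : P * Pᴴ = 1 := mem_unitaryGroup_iff.1 hP
  have hconj : Rᴴ * (P * diagonal (fun i => (a i : ℂ)) * Pᴴ) * R =
      (Pᴴ * R)ᴴ * diagonal (fun i => (a i : ℂ)) * (Pᴴ * R) := by
    simp only [conjTranspose_mul, conjTranspose_conjTranspose, Matrix.mul_assoc]
  have hgram : Rᴴ * R = (Pᴴ * R)ᴴ * (Pᴴ * R) := by
    rw [conjTranspose_mul, conjTranspose_conjTranspose, Matrix.mul_assoc, ← Matrix.mul_assoc P,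
      hPP, Matrix.one_mul]
  rw [hconj, hgram]
  exact re_det_conjTranspose_mul_diagonal_mul_le (Pᴴ * R) a hB

end Complex

theorem PosSemidef.exists_unitary_antitone_diagonalization {N : ℕ}
    {C : Matrix (Fin N) (Fin N) ℂ} (hC : C.PosSemidef) :
    ∃ U ∈ unitaryGroup (Fin N) ℂ, ∃ μ : Fin N → ℝ, Antitone μ ∧ (∀ i, 0 ≤ μ i) ∧
      C = U * diagonal (fun i => (μ i : ℂ)) * Uᴴ := by
  -- `hC.1.eigenvalues` is not sorted, so the eigenvectors are permuted by `Tuple.sort`.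
  let U₀ : Matrix (Fin N) (Fin N) ℂ := hC.1.eigenvectorUnitary
  let e := Tuple.sort (OrderDual.toDual ∘ hC.1.eigenvalues)
  have hU₀ : U₀ ∈ unitaryGroup (Fin N) ℂ := hC.1.eigenvectorUnitary.2
  have hspec : C = U₀ * diagonal (fun i => (hC.1.eigenvalues i : ℂ)) * U₀ᴴ :=
    hC.1.spectral_theorem
  refine ⟨U₀.submatrix id e, ?_, hC.1.eigenvalues ∘ e,
    fun _ _ hij => Tuple.monotone_sort (OrderDual.toDual ∘ hC.1.eigenvalues) hij,
    fun i => hC.eigenvalues_nonneg _, ?_⟩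
  · rw [mem_unitaryGroup_iff', star_eq_conjTranspose]
    exact conjTranspose_submatrix_mul_submatrix_of_mem_unitaryGroup hU₀ e.injective
  · have hdiag : diagonal (fun i => ((hC.1.eigenvalues ∘ e) i : ℂ)) =
        (diagonal fun i => (hC.1.eigenvalues i : ℂ)).submatrix e e :=
      (submatrix_diagonal_equiv (fun i => (hC.1.eigenvalues i : ℂ)) e).symm
    rw [conjTranspose_submatrix, hdiag, submatrix_mul_equiv,
      submatrix_mul_equiv, submatrix_id_id]
    exact hspec

theorem prod_castLE_le_prod_mul_of_unitary_conj {N : ℕ} {P S U : Matrix (Fin N) (Fin N) ℂ}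
    (hP : P ∈ unitaryGroup (Fin N) ℂ) (hU : U ∈ unitaryGroup (Fin N) ℂ) {α lam μ : Fin N → ℝ}
    (hα : ∀ i, 0 ≤ α i) (hαa : Antitone α) (hlam : ∀ i, 0 ≤ lam i) (hlama : Antitone lam)
    (hS : Sᴴ * S = diagonal (fun i => (lam i : ℂ)))
    (hC : Sᴴ * (P * diagonal (fun i => (α i : ℂ)) * Pᴴ) * S =
      U * diagonal (fun i => (μ i : ℂ)) * Uᴴ)
    {k : ℕ} (hk : k ≤ N) :
    ∏ j : Fin k, μ (Fin.castLE hk j) ≤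
      ∏ j : Fin k, α (Fin.castLE hk j) * lam (Fin.castLE hk j) := by
  set g := Fin.castLE hk
  have hg : Function.Injective g := Fin.castLE_injective hk
  set Q := U.submatrix id g
  have hQQ : Qᴴ * Q = 1 := conjTranspose_submatrix_mul_submatrix_of_mem_unitaryGroup hU hg
  have hμ : ∏ j, μ (g j) = (Qᴴ * (U * diagonal (fun i => (μ i : ℂ)) * Uᴴ) * Q).det.re := by
    rw [conjTranspose_submatrix_mul_unitary_conj_mul_submatrix hU _ hg, det_diagonal,
      Function.comp_def, ← Complex.ofReal_prod, Complex.ofReal_re]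
  calc ∏ j, μ (g j)
      = ((S * Q)ᴴ * (P * diagonal (fun i => (α i : ℂ)) * Pᴴ) * (S * Q)).det.re := by
        rw [hμ, ← hC, conjTranspose_mul]
        simp only [Matrix.mul_assoc]
    _ ≤ (∏ j, α (g j)) * ((S * Q)ᴴ * (S * Q)).det.re :=
        re_det_conjTranspose_mul_unitary_conj_mul_le hP _ α fun f hf =>
          hαa.prod_comp_le_prod_castLE hα hf hk
    _ = (∏ j, α (g j)) * (Qᴴ * diagonal (fun i => (lam i : ℂ)) * Q).det.re := by
        rw [← hS, conjTranspose_mul]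
        simp only [Matrix.mul_assoc]
    _ ≤ (∏ j, α (g j)) * ((∏ j, lam (g j)) * (Qᴴ * Q).det.re) :=
        mul_le_mul_of_nonneg_left
          (re_det_conjTranspose_mul_diagonal_mul_le Q lam fun f hf =>
            hlama.prod_comp_le_prod_castLE hlam hf hk)
          (prod_nonneg fun j _ => hα _)
    _ = ∏ j, α (g j) * lam (g j) := by
        rw [hQQ, det_one, Complex.one_re, mul_one, prod_mul_distrib]

theorem exists_mul_conjTranspose_eq_unitary_conj_diagonal {N : ℕ}
    {V : Matrix (Fin N) (Fin N) ℂ} (hV : V ∈ unitaryGroup (Fin N) ℂ) {lam : Fin N → ℝ}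
    (hlam : ∀ i, 0 ≤ lam i) :
    ∃ S : Matrix (Fin N) (Fin N) ℂ, S * Sᴴ = V * diagonal (fun i => (lam i : ℂ)) * Vᴴ ∧
      Sᴴ * S = diagonal (fun i => (lam i : ℂ)) := by
  set D : Matrix (Fin N) (Fin N) ℂ := diagonal fun i => ((√(lam i) : ℝ) : ℂ)
  have hDD : D * D = diagonal (fun i => (lam i : ℂ)) := by
    rw [diagonal_mul_diagonal]
    congr 1 with i
    rw [← Complex.ofReal_mul, Real.mul_self_sqrt (hlam i)]
  have hDH : Dᴴ = D := by
    rw [diagonal_conjTranspose]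
    congr 1 with i
    simp
  have hVV : Vᴴ * V = 1 := mem_unitaryGroup_iff'.1 hV
  refine ⟨V * D, ?_, ?_⟩
  · rw [conjTranspose_mul, hDH, Matrix.mul_assoc, ← Matrix.mul_assoc D, hDD, Matrix.mul_assoc]
  · rw [conjTranspose_mul, hDH, Matrix.mul_assoc, ← Matrix.mul_assoc Vᴴ, hVV, Matrix.one_mul, hDD]

theorem re_det_one_add_smul_unitary_conj_mul_unitary_conj_le {N : ℕ} {c : ℝ} (hc : 0 ≤ c)
    {P V : Matrix (Fin N) (Fin N) ℂ} (hP : P ∈ unitaryGroup (Fin N) ℂ)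
    (hV : V ∈ unitaryGroup (Fin N) ℂ) {α lam : Fin N → ℝ} (hα : ∀ i, 0 ≤ α i)
    (hαa : Antitone α) (hlam : ∀ i, 0 ≤ lam i) (hlama : Antitone lam) :
    (1 + (c : ℂ) • (P * diagonal (fun i => (α i : ℂ)) * Pᴴ *
      (V * diagonal (fun i => (lam i : ℂ)) * Vᴴ))).det.re ≤ ∏ i, (1 + c * α i * lam i) := by
  obtain ⟨S, hSS, hSS'⟩ := exists_mul_conjTranspose_eq_unitary_conj_diagonal hV hlam
  have hC : (Sᴴ * (P * diagonal (fun i => (α i : ℂ)) * Pᴴ) * S).PosSemidef :=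
    ((posSemidef_diagonal_iff.2 fun i => by exact_mod_cast hα i).mul_mul_conjTranspose_same
      P).conjTranspose_mul_mul_same S
  obtain ⟨U, hU, μ, hμa, hμ0, hCU⟩ := hC.exists_unitary_antitone_diagonalization
  have hdet : (1 + (c : ℂ) • (P * diagonal (fun i => (α i : ℂ)) * Pᴴ *
      (V * diagonal (fun i => (lam i : ℂ)) * Vᴴ))).det = ((∏ i, (1 + c * μ i) : ℝ) : ℂ) := by
    rw [← hSS, ← Matrix.mul_assoc, ← smul_mul, det_one_add_mul_comm, Matrix.mul_smul,
      ← Matrix.mul_assoc, hCU, det_one_add_smul_unitary_conj_diagonal hU]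
    push_cast
    rfl
  rw [hdet, Complex.ofReal_re]
  calc ∏ i, (1 + c * μ i) ≤ ∏ i, (1 + c * (α i * lam i)) :=
        Fin.prod_one_add_mul_le_of_forall_prod_castLE_le hμ0
          (fun i => mul_nonneg (hα i) (hlam i)) hμa
          (fun k hk => prod_castLE_le_prod_mul_of_unitary_conj hP hU hα hαa hlam hlama hSS' hCU hk)
          hc
    _ = ∏ i, (1 + c * α i * lam i) := by simp only [mul_assoc]

theorem det_one_add_smul_unitary_conj_mul_unitary_conj {N : ℕ} {P : Matrix (Fin N) (Fin N) ℂ}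
    (hP : P ∈ unitaryGroup (Fin N) ℂ) (c : ℂ) (α lam : Fin N → ℝ) :
    (1 + c • (P * diagonal (fun i => (α i : ℂ)) * Pᴴ *
      (P * diagonal (fun i => (lam i : ℂ)) * Pᴴ))).det = ∏ i, (1 + c * α i * lam i) := by
  have hPP : Pᴴ * P = 1 := mem_unitaryGroup_iff'.1 hP
  have hKW : P * diagonal (fun i => (α i : ℂ)) * Pᴴ * (P * diagonal (fun i => (lam i : ℂ)) * Pᴴ) =
      P * diagonal (fun i => (α i : ℂ) * lam i) * Pᴴ := by
    simp only [Matrix.mul_assoc]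
    rw [← Matrix.mul_assoc Pᴴ, hPP, Matrix.one_mul, ← Matrix.mul_assoc (diagonal _),
      diagonal_mul_diagonal]
  rw [hKW, det_one_add_smul_unitary_conj_diagonal hP]
  simp only [mul_assoc]

end Matrix

theorem hadamard_capacity_bound_general {N : ℕ} (σ : ℝ)
    (P V : Matrix (Fin N) (Fin N) ℂ)
    (hP : P ∈ Matrix.unitaryGroup (Fin N) ℂ) (hV : V ∈ Matrix.unitaryGroup (Fin N) ℂ)
    (α lam : Fin N → ℝ) (hα : ∀ i, 0 ≤ α i) (hlam : ∀ i, 0 ≤ lam i)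
    (hαsort : Antitone α) (hlamsort : Antitone lam)
    (K W : Matrix (Fin N) (Fin N) ℂ)
    (hK : K = P * Matrix.diagonal (fun i => (α i : ℂ)) * Pᴴ)
    (hW : W = V * Matrix.diagonal (fun i => (lam i : ℂ)) * Vᴴ) :
    ((1 + ((σ ^ 2)⁻¹ : ℂ) • (K * W)).det.re ≤ ∏ i, (1 + (σ ^ 2)⁻¹ * α i * lam i)) ∧
    (P = V →
      (1 + ((σ ^ 2)⁻¹ : ℂ) • (K * W)).det = ∏ i, ((1 : ℂ) + ((σ ^ 2)⁻¹ : ℂ) * α i * lam i)) := by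
  subst hK hW
  have hc : ((σ ^ 2)⁻¹ : ℂ) = (((σ ^ 2)⁻¹ : ℝ) : ℂ) := by push_cast; rfl
  refine ⟨?_, fun hPV => ?_⟩
  · rw [hc]
    exact re_det_one_add_smul_unitary_conj_mul_unitary_conj_le (by positivity) hP hV hα hαsort
      hlam hlamsort
  · subst hPV
    exact det_one_add_smul_unitary_conj_mul_unitary_conj hP _ α lam

/-- Hadamard-type bound: if `K = P Λ_K Pᴴ` and `W = V Λ_W Vᴴ` with `P, V` unitary and
with nonnegative eigenvalues sorted in decreasing order, then
`det(I + σ⁻² K W) ≤ det(I + σ⁻² Λ_K Λ_W)`, with equality when `P = V`. -/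
theorem hadamard_capacity_bound {N : ℕ} (σ : ℝ) (hσ : 0 < σ)
    (P V : Matrix (Fin N) (Fin N) ℂ)
    (hP : P ∈ Matrix.unitaryGroup (Fin N) ℂ) (hV : V ∈ Matrix.unitaryGroup (Fin N) ℂ)
    (α lam : Fin N → ℝ) (hα : ∀ i, 0 ≤ α i) (hlam : ∀ i, 0 ≤ lam i)
    (hαsort : Antitone α) (hlamsort : Antitone lam)
    (K W : Matrix (Fin N) (Fin N) ℂ)
    (hK : K = P * Matrix.diagonal (fun i => (α i : ℂ)) * Pᴴ)
    (hW : W = V * Matrix.diagonal (fun i => (lam i : ℂ)) * Vᴴ) :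
    ((1 + ((σ ^ 2)⁻¹ : ℂ) • (K * W)).det.re ≤ ∏ i, (1 + (σ ^ 2)⁻¹ * α i * lam i)) ∧
    (P = V →
      (1 + ((σ ^ 2)⁻¹ : ℂ) • (K * W)).det = ∏ i, ((1 : ℂ) + ((σ ^ 2)⁻¹ : ℂ) * α i * lam i)) :=
  hadamard_capacity_bound_general σ P V hP hV α lam hα hlam hαsort hlamsort K W hK hW
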